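/- The category PT, whose objects are planar rooted trees and whose morphisms are order embeddings preserving the root and the depth-first ordering on vertices, is a Gröbner category: for every object T of PT, the divisibility quasi-order on the set PT_T of morphisms with domain T is a well-quasi-order, and PT_T admits an admissible order. -/

import Mathlib

/-- A finite rooted tree, encoded as a finite partial order (the tree order,
with the root as maximum element) in which the set of elements above any
vertex is a chain (the path from the vertex to the root). -/
structure RTree where
  V : Type
  finite : Finite V
  le : V → V → Prop
  le_refl : ∀ v, le v v
  le_antisymm : ∀ v w, le v w → le w v → v = w
  le_trans : ∀ u v w, le u v → le v w → le u w
  root : V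
  le_root : ∀ v, le v root
  up_total : ∀ u v w, le u v → le u w → le v w ∨ le w v

/-- A planar rooted tree: a rooted tree together with its depth-first ordering,
a linear order on the vertices arising from the total orderings of the incoming
edges at each vertex via a clockwise depth-first tree walk.  Such linear orders
are exactly those in which ancestors precede descendants and every principal
downset of the tree order is an interval. -/
structure PRTree extends RTree where
  dfle : V → V → Prop
  dfle_refl : ∀ v, dfle v v
  dfle_antisymm : ∀ v w, dfle v w → dfle w v → v = w
  dfle_trans : ∀ u v w, dfle u v → dfle v w → dfle u w
  dfle_total : ∀ v w, dfle v w ∨ dfle w v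
  dfle_of_le : ∀ v w, le v w → dfle w v
  downset_interval : ∀ u a b c, le a u → le c u → dfle a b → dfle b c → le b u

/-- A morphism in the category `PT`: an order embedding of vertex sets which
preserves the root and the depth-first ordering. -/
structure PTHom (T U : PRTree) where
  toFun : T.V → U.V
  inj : Function.Injective toFun
  map_le : ∀ v w, T.le v w → U.le (toFun v) (toFun w)
  reflect_le : ∀ v w, U.le (toFun v) (toFun w) → T.le v w
  map_root : toFun T.root = U.root
  map_dfle : ∀ v w, T.dfle v w → U.dfle (toFun v) (toFun w)

def PTHom.id (T : PRTree) : PTHom T T where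
  toFun := fun v => v
  inj := fun _ _ h => h
  map_le := fun _ _ h => h
  reflect_le := fun _ _ h => h
  map_root := rfl
  map_dfle := fun _ _ h => h

def PTHom.comp {T U W : PRTree} (g : PTHom U W) (f : PTHom T U) :
    PTHom T W where
  toFun := fun v => g.toFun (f.toFun v)
  inj := fun _ _ h => f.inj (g.inj h)
  map_le := fun v w h => g.map_le _ _ (f.map_le v w h)
  reflect_le := fun v w h => f.reflect_le _ _ (g.reflect_le _ _ h)
  map_root := by show g.toFun (f.toFun T.root) = W.root; rw [f.map_root, g.map_root]
  map_dfle := fun v w h => g.map_dfle _ _ (f.map_dfle v w h)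



namespace PTGrobner

inductive KTree (L : Type*) : Type _
  | node : L → List (KTree L) → KTree L

namespace KTree

variable {L : Type*}

def label : KTree L → L
  | node l _ => l

def children : KTree L → List (KTree L)
  | node _ ts => ts

theorem node_label_children (t : KTree L) : t = node t.label t.children := by
  cases t; rfl

theorem sizeOf_lt_of_mem_children [SizeOf L] {t u : KTree L} (h : t ∈ u.children) :
    sizeOf t < sizeOf u := by
  cases u with
  | node l ts =>
    simp only [children] at h
    have := List.sizeOf_lt_of_mem h
    simp only [node.sizeOf_spec]
    omega

/-- Custom induction principle for `KTree`. -/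
theorem ind {P : KTree L → Prop}
    (h : ∀ l ts, (∀ t ∈ ts, P t) → P (node l ts)) : ∀ t, P t
  | node l ts => h l ts (fun t ht => ind h t)
termination_by t => sizeOf t
decreasing_by
  have := List.sizeOf_lt_of_mem ht
  simp only [node.sizeOf_spec]
  omega

variable (r : L → L → Prop)

/-- Kruskal (topological-minor style) embedding of labeled planar trees. -/
inductive Emb : KTree L → KTree L → Prop
  | inSub {t u l' us} : Emb t u → u ∈ us → Emb t (node l' us)
  | root {l ts l' us} : r l l' → List.SublistForall₂ Emb ts us → Emb (node l ts) (node l' us)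

variable {r}

theorem sublistForall₂_refl_of_mem {l : List (KTree L)}
    (h : ∀ t ∈ l, Emb r t t) : List.SublistForall₂ (Emb r) l l := by
  induction l with
  | nil => exact List.SublistForall₂.nil
  | cons a l ih =>
    exact List.SublistForall₂.cons (h a List.mem_cons_self)
      (ih fun t ht => h t (List.mem_cons_of_mem a ht))

theorem Emb.refl (hr : ∀ l, r l l) : ∀ t : KTree L, Emb r t t := by
  intro t
  induction t using KTree.ind with
  | h l ts ih => exact Emb.root (hr l) (sublistForall₂_refl_of_mem ih)

theorem sublistForall₂_exists_mem {R : KTree L → KTree L → Prop} :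
    ∀ {l₁ l₂ : List (KTree L)}, List.SublistForall₂ R l₁ l₂ → ∀ {a}, a ∈ l₁ →
      ∃ b ∈ l₂, R a b := by
  intro l₁ l₂ h
  induction h with
  | nil => intro a ha; exact absurd ha List.not_mem_nil
  | @cons a b l₁ l₂ hab h ih =>
    intro c hc
    rcases List.mem_cons.1 hc with rfl | hc
    · exact ⟨b, List.mem_cons_self, hab⟩
    · obtain ⟨d, hd, hcd⟩ := ih hc
      exact ⟨d, List.mem_cons_of_mem _ hd, hcd⟩
  | @cons_right a l₁ l₂ h ih =>
    intro c hc
    obtain ⟨d, hd, hcd⟩ := ih hc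
    exact ⟨d, List.mem_cons_of_mem _ hd, hcd⟩

/-- Composition of `SublistForall₂`s, with the pointwise composition given only on members. -/
theorem sublistForall₂_comp {α : Type*} {R S Q : α → α → Prop} :
    ∀ {l₂ l₃ : List α}, List.SublistForall₂ S l₂ l₃ →
      ∀ {l₁ : List α}, List.SublistForall₂ R l₁ l₂ →
      (∀ b ∈ l₂, ∀ c ∈ l₃, ∀ a, R a b → S b c → Q a c) →
      List.SublistForall₂ Q l₁ l₃ := by
  intro l₂ l₃ h₂
  induction h₂ with
  | nil =>
    intro l₁ h₁ _
    cases h₁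
    exact List.SublistForall₂.nil
  | @cons b c l₂ l₃ hbc h₂ ih =>
    intro l₁ h₁ hcomp
    cases h₁ with
    | nil => exact List.SublistForall₂.nil
    | cons hab h₁' =>
      exact List.SublistForall₂.cons
        (hcomp b List.mem_cons_self c List.mem_cons_self _ hab hbc)
        (ih h₁' fun b' hb' c' hc' a' h h' =>
          hcomp b' (List.mem_cons_of_mem _ hb') c' (List.mem_cons_of_mem _ hc') a' h h')
    | cons_right h₁' =>
      exact List.SublistForall₂.cons_right
        (ih h₁' fun b' hb' c' hc' a' h h' =>
          hcomp b' (List.mem_cons_of_mem _ hb') c' (List.mem_cons_of_mem _ hc') a' h h')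
  | @cons_right c l₂ l₃ h₂ ih =>
    intro l₁ h₁ hcomp
    exact List.SublistForall₂.cons_right
      (ih h₁ fun b' hb' c' hc' a' h h' =>
        hcomp b' hb' c' (List.mem_cons_of_mem _ hc') a' h h')

theorem Emb.trans (hr : Transitive r) :
    ∀ (u v t : KTree L), Emb r t u → Emb r u v → Emb r t v
  | u, v, t, h₁, h₂ => by
    cases h₂ with
    | @inSub _ w l'' vs h₂' hm =>
      exact Emb.inSub (Emb.trans hr u w t h₁ h₂') hm
    | @root l' us l'' vs hl₂ hs₂ =>
      cases h₁ with
      | @inSub _ u' _ _ h₁' hm =>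
        obtain ⟨v', hv', he⟩ := sublistForall₂_exists_mem hs₂ hm
        exact Emb.inSub (Emb.trans hr u' v' t h₁' he) hv'
      | @root l ts _ _ hl₁ hs₁ =>
        refine Emb.root (hr hl₁ hl₂) (sublistForall₂_comp hs₂ hs₁ ?_)
        intro b hb c hc a hab hbc
        exact Emb.trans hr b c a hab hbc
termination_by u v t => sizeOf u + sizeOf v
decreasing_by
  · subst_vars
    have := List.sizeOf_lt_of_mem hm
    simp only [KTree.node.sizeOf_spec]; omega
  · subst_vars
    have h1 := List.sizeOf_lt_of_mem hm
    have h2 := List.sizeOf_lt_of_mem hv'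
    simp only [KTree.node.sizeOf_spec]; omega
  · subst_vars
    have h1 := List.sizeOf_lt_of_mem hb
    have h2 := List.sizeOf_lt_of_mem hc
    simp only [KTree.node.sizeOf_spec]; omega

end KTree

end PTGrobner
namespace PTGrobner
namespace KTree

open Set.PartiallyWellOrderedOn in
/-- Kruskal's tree theorem for labeled planar trees. -/
theorem kruskal {L : Type*} {r : L → L → Prop} (hrefl : ∀ l, r l l) (htr : Transitive r)
    (hwqo : (Set.univ : Set L).PartiallyWellOrderedOn r) :
    (Set.univ : Set (KTree L)).PartiallyWellOrderedOn (Emb r) := by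
  haveI : IsRefl (KTree L) (Emb r) := ⟨Emb.refl hrefl⟩
  haveI : IsTrans (KTree L) (Emb r) := ⟨fun a b c h₁ h₂ => Emb.trans htr b c a h₁ h₂⟩
  haveI : IsRefl L r := ⟨hrefl⟩
  haveI : IsTrans L r := ⟨fun a b c hab hbc => htr hab hbc⟩
  rw [iff_not_exists_isMinBadSeq sizeOf]
  rintro ⟨f, hf, hfmin⟩
  -- the set of children of trees in the sequence
  set S : Set (KTree L) := {t | ∃ n, t ∈ (f n).children} with hS
  have hSpwo : S.PartiallyWellOrderedOn (Emb r) := by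
    rw [Set.partiallyWellOrderedOn_iff_exists_lt]
    intro g hg
    by_contra hbad
    push_neg at hbad
    choose φ hφ using hg
    -- minimal index
    obtain ⟨n₀, hn₀⟩ : ∃ n₀, ∀ n, φ n₀ ≤ φ n := by
      classical
      have h : ∃ k, ∃ n, φ n = k := ⟨φ 0, 0, rfl⟩
      obtain ⟨n', hn'⟩ := Nat.find_spec h
      refine ⟨n', fun n => ?_⟩
      rw [hn']
      exact Nat.find_min' h ⟨n, rfl⟩
    set m := φ n₀ with hm
    set c : ℕ → KTree L := fun i => if i < m then f i else g (i - m + n₀) with hc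
    have hcbad : Set.PartiallyWellOrderedOn.IsBadSeq (Emb r) Set.univ c := by
      constructor
      · exact fun n => Set.mem_univ _
      · intro i j hij hembc
        simp only [hc] at hembc
        by_cases hj : j < m
        · rw [if_pos (hij.trans hj), if_pos hj] at hembc
          exact hf.2 i j hij hembc
        · rw [if_neg hj] at hembc
          by_cases hi : i < m
          · rw [if_pos hi] at hembc
            -- Emb (f i) (g k), g k child of f (φ k)
            set k := j - m + n₀ with hk
            have h1 : Emb r (f i) (f (φ k)) := by
              rw [node_label_children (f (φ k))]
              exact Emb.inSub hembc (hφ k)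
            exact hf.2 i (φ k) (lt_of_lt_of_le hi (hm ▸ hn₀ k)) h1
          · rw [if_neg hi] at hembc
            have : i - m + n₀ < j - m + n₀ := by omega
            exact hbad _ _ this hembc
    -- contradicts minimality at m
    refine hfmin m c (fun i hi => (if_pos hi).symm) ?_ hcbad
    have : c m = g n₀ := by simp [hc]
    rw [this]
    exact sizeOf_lt_of_mem_children (hφ n₀)
  -- now use Higman and the label wqo to get a good pair for f
  haveI : IsPreorder (KTree L) (Emb r) := {}
  haveI : IsPreorder L r := {}
  have hlists := hSpwo.partiallyWellOrderedOn_sublistForall₂ (r := Emb r)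
  obtain ⟨g, hgmono⟩ := hwqo.exists_monotone_subseq (f := fun n => (f n).label)
    (fun _ => Set.mem_univ _)
  obtain ⟨i, j, hij, hemb⟩ := Set.partiallyWellOrderedOn_iff_exists_lt.mp hlists
    (fun n => (f (g n)).children)
    (fun n t ht => ⟨g n, ht⟩)
  refine hf.2 (g i) (g j) (g.strictMono hij) ?_
  rw [node_label_children (f (g i)), node_label_children (f (g j))]
  exact Emb.root (hgmono i j hij.le) hemb

end KTree
end PTGrobner

namespace PTGrobner

/-- `c` is a child of `u`: `c < u` with nothing strictly in between. -/
def IsChild (U : PRTree) (c u : U.V) : Prop :=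
  U.le c u ∧ c ≠ u ∧ ∀ x, U.le c x → U.le x u → x = c ∨ x = u

theorem child_unique {U : PRTree} {c₁ c₂ u w : U.V}
    (h₁ : IsChild U c₁ u) (h₂ : IsChild U c₂ u)
    (hw₁ : U.le w c₁) (hw₂ : U.le w c₂) : c₁ = c₂ := by
  rcases U.up_total w c₁ c₂ hw₁ hw₂ with h | h
  · rcases h₁.2.2 c₂ h h₂.1 with h' | h'
    · exact h'.symm
    · exact absurd h' h₂.2.1
  · rcases h₂.2.2 c₁ h h₁.1 with h' | h'
    · exact h'
    · exact absurd h' h₁.2.1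

theorem child_exists {U : PRTree} {w u : U.V} (hwu : U.le w u) (hne : w ≠ u) :
    ∃ c, IsChild U c u ∧ U.le w c := by
  classical
  haveI := U.finite
  letI : PartialOrder U.V :=
    { le := U.le
      le_refl := U.le_refl
      le_trans := U.le_trans
      le_antisymm := U.le_antisymm }
  set C : Set U.V := {x | U.le w x ∧ U.le x u ∧ x ≠ u} with hC
  have hwC : w ∈ C := ⟨U.le_refl w, hwu, hne⟩
  obtain ⟨c, hcC, hcmax⟩ := Set.Finite.exists_maximalFor id C (Set.toFinite C) ⟨w, hwC⟩
  refine ⟨c, ⟨hcC.2.1, hcC.2.2, ?_⟩, hcC.1⟩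
  intro x hcx hxu
  by_cases hx : x = u
  · exact Or.inr hx
  · left
    exact U.le_antisymm _ _ (hcmax (show x ∈ C from ⟨U.le_trans _ _ _ hcC.1 hcx, hxu, hx⟩) hcx) hcx

theorem not_le_of_children_ne {U : PRTree} {c₁ c₂ u a b : U.V}
    (h₁ : IsChild U c₁ u) (h₂ : IsChild U c₂ u) (hne : c₁ ≠ c₂)
    (ha : U.le a c₁) (hb : U.le b c₂) : ¬U.le a b :=
  fun hab => hne (child_unique h₁ h₂ ha (U.le_trans _ _ _ hab hb))

theorem dfle_across {U : PRTree} {c₁ c₂ u a b : U.V}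
    (h₁ : IsChild U c₁ u) (h₂ : IsChild U c₂ u) (hne : c₁ ≠ c₂)
    (hc : U.dfle c₁ c₂) (ha : U.le a c₁) (hb : U.le b c₂) : U.dfle a b := by
  rcases U.dfle_total a b with h | h
  · exact h
  · -- dfle b a; derive a contradiction unless a = b
    by_cases hab : a = b
    · subst hab; exact U.dfle_refl a
    · exfalso
      have hc₁b : U.dfle c₁ b := U.dfle_trans _ _ _ hc (U.dfle_of_le _ _ hb)
      have hbc₁ : U.le b c₁ :=
        U.downset_interval c₁ c₁ b a (U.le_refl c₁) ha hc₁b h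
      exact hne (child_unique h₁ h₂ hbc₁ hb)

noncomputable def dfLinearOrder (U : PRTree) : LinearOrder U.V :=
  { le := U.dfle
    le_refl := U.dfle_refl
    le_trans := U.dfle_trans
    le_antisymm := U.dfle_antisymm
    le_total := U.dfle_total
    toDecidableLE := Classical.decRel _
    toDecidableEq := Classical.decEq _ }

theorem exists_children_list (U : PRTree) (u : U.V) :
    ∃ l : List U.V, (∀ c, c ∈ l ↔ IsChild U c u) ∧ l.Pairwise U.dfle ∧ l.Nodup := by
  classical
  haveI := U.finite
  letI := Fintype.ofFinite U.V
  letI := dfLinearOrder U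
  refine ⟨(Finset.univ.filter (fun w => IsChild U w u)).sort (· ≤ ·), fun c => ?_, ?_, ?_⟩
  · rw [Finset.mem_sort, Finset.mem_filter]
    simp
  · exact Finset.pairwise_sort _ (· ≤ ·)
  · exact Finset.sort_nodup _ (· ≤ ·)

noncomputable def childrenList (U : PRTree) (u : U.V) : List U.V :=
  Classical.choose (exists_children_list U u)

theorem mem_childrenList {U : PRTree} {u c : U.V} :
    c ∈ childrenList U u ↔ IsChild U c u :=
  (Classical.choose_spec (exists_children_list U u)).1 c

theorem childrenList_sorted (U : PRTree) (u : U.V) :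
    (childrenList U u).Pairwise U.dfle :=
  (Classical.choose_spec (exists_children_list U u)).2.1

theorem childrenList_nodup (U : PRTree) (u : U.V) :
    (childrenList U u).Nodup :=
  (Classical.choose_spec (exists_children_list U u)).2.2

noncomputable def downCard (U : PRTree) (u : U.V) : ℕ :=
  {w | U.le w u}.ncard

theorem downCard_lt_of_child {U : PRTree} {c u : U.V} (h : IsChild U c u) :
    downCard U c < downCard U u := by
  haveI := U.finite
  refine Set.ncard_lt_ncard ⟨fun w hw => U.le_trans _ _ _ hw h.1, fun hsub => ?_⟩
    (Set.toFinite _)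
  exact h.2.1 (U.le_antisymm _ _ h.1 (hsub (U.le_refl u)))

noncomputable def encodeAt (U : PRTree) {L : Type} (m : U.V → L) (u : U.V) : KTree L :=
  .node (m u) ((childrenList U u).attach.map (fun c => encodeAt U m c.1))
termination_by downCard U u
decreasing_by
  exact downCard_lt_of_child (mem_childrenList.mp c.2)

theorem encodeAt_def (U : PRTree) {L : Type} (m : U.V → L) (u : U.V) :
    encodeAt U m u = .node (m u) ((childrenList U u).map (encodeAt U m)) := by
  rw [encodeAt]
  congr 1
  simp

end PTGrobner

namespace PTGrobner

/-- The properties of a partial order-embedding defined on the downset of `u`,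
with values in the downset of `u'`. -/
def Props {L : Type} (r : L → L → Prop) (U U' : PRTree) (m : U.V → L) (m' : U'.V → L)
    (u : U.V) (u' : U'.V) (h : U.V → U'.V) : Prop :=
  (∀ w, U.le w u → U'.le (h w) u') ∧
  (∀ w₁ w₂, U.le w₁ u → U.le w₂ u → (U.le w₁ w₂ ↔ U'.le (h w₁) (h w₂))) ∧
  (∀ w₁ w₂, U.le w₁ u → U.le w₂ u → U.dfle w₁ w₂ → U'.dfle (h w₁) (h w₂)) ∧
  (∀ w, U.le w u → r (m w) (m' (h w)))

theorem decode_main {L : Type} (r : L → L → Prop) :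
    ∀ N : ℕ, ∀ U U' : PRTree, ∀ (m : U.V → L) (m' : U'.V → L) (u : U.V) (u' : U'.V),
      downCard U u + downCard U' u' ≤ N →
      ((r (m u) (m' u') ∧
          List.SublistForall₂ (KTree.Emb r) ((childrenList U u).map (encodeAt U m))
            ((childrenList U' u').map (encodeAt U' m')) →
          ∃ h, Props r U U' m m' u u' h ∧ h u = u') ∧
        (KTree.Emb r (encodeAt U m u) (encodeAt U' m' u') →
          ∃ h, Props r U U' m m' u u' h)) := by
  intro N
  induction N using Nat.strong_induction_on with
  | _ N IH =>
  intro U U' m m' u u' hN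
  classical
  have hP₀ : r (m u) (m' u') ∧
      List.SublistForall₂ (KTree.Emb r) ((childrenList U u).map (encodeAt U m))
        ((childrenList U' u').map (encodeAt U' m')) →
      ∃ h, Props r U U' m m' u u' h ∧ h u = u' := by
    rintro ⟨hlab, hsub⟩
    rw [List.sublistForall₂_iff] at hsub
    obtain ⟨s, hforall, hsl⟩ := hsub
    obtain ⟨ds, hsl'', rfl⟩ := List.sublist_map_iff.mp hsl
    rw [List.forall₂_map_left_iff, List.forall₂_map_right_iff] at hforall
    set cs := childrenList U u with hcs
    have hlen : cs.length = ds.length := hforall.length_eq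
    have hget := (List.forall₂_iff_get.mp hforall).2
    set cI : Fin cs.length → U.V := fun i => cs.get i with hcI
    set dI : Fin cs.length → U'.V := fun i => ds.get (Fin.cast hlen i) with hdI
    have hchild : ∀ i, IsChild U (cI i) u := fun i =>
      mem_childrenList.mp (List.get_mem _ _)
    have hchild' : ∀ i, IsChild U' (dI i) u' := fun i =>
      mem_childrenList.mp (hsl''.subset (List.get_mem _ _))
    have hcIne : ∀ i j, i ≠ j → cI i ≠ cI j := fun i j hij hcc =>
      hij (((childrenList_nodup U u).get_inj_iff).mp hcc)
    have hdIne : ∀ i j, i ≠ j → dI i ≠ dI j := by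
      intro i j hij hcc
      have h1 := (((childrenList_nodup U' u').sublist hsl'').get_inj_iff).mp hcc
      have h2 := congrArg Fin.val h1
      exact hij (Fin.ext h2)
    have hrel : ∀ i : Fin cs.length,
        KTree.Emb r (encodeAt U m (cI i)) (encodeAt U' m' (dI i)) := fun i =>
      hget i i.2 (hlen ▸ i.2)
    have hex : ∀ i : Fin cs.length, ∃ h, Props r U U' m m' (cI i) (dI i) h := by
      intro i
      refine (IH (downCard U (cI i) + downCard U' (dI i))
        (lt_of_lt_of_le (add_lt_add (downCard_lt_of_child (hchild i))
          (downCard_lt_of_child (hchild' i))) hN) U U' m m' (cI i) (dI i) le_rfl).2 (hrel i)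
    choose hf hfprops using hex
    have hA_i : ∀ i w, U.le w (cI i) → U'.le (hf i w) (dI i) := fun i => (hfprops i).1
    have hB_i := fun i => (hfprops i).2.1
    have hC_i := fun i => (hfprops i).2.2.1
    have hD_i := fun i => (hfprops i).2.2.2
    set h : U.V → U'.V :=
      fun w => if hw : ∃ i : Fin cs.length, U.le w (cs.get i) then hf hw.choose w else u'
      with hh
    have huniq : ∀ (w : U.V) (i j : Fin cs.length), U.le w (cI i) → U.le w (cI j) → i = j := by
      intro w i j hi hj
      exact ((childrenList_nodup U u).get_inj_iff).mp (child_unique (hchild i) (hchild j) hi hj)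
    have hres : ∀ w, U.le w u → w ≠ u → ∃ i : Fin cs.length, U.le w (cI i) ∧ h w = hf i w := by
      intro w hwu hwne
      obtain ⟨c, hc, hwc⟩ := child_exists hwu hwne
      have hcmem : c ∈ cs := mem_childrenList.mpr hc
      obtain ⟨i, hi⟩ := List.mem_iff_get.mp hcmem
      have hw : ∃ i : Fin cs.length, U.le w (cs.get i) := ⟨i, hi ▸ hwc⟩
      exact ⟨hw.choose, hw.choose_spec, dif_pos hw⟩
    have hhu : h u = u' := by
      refine dif_neg ?_
      rintro ⟨i, hui⟩
      exact (hchild i).2.1 (U.le_antisymm _ _ (hchild i).1 hui)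
    have hA : ∀ w, U.le w u → U'.le (h w) u' := by
      intro w hwu
      by_cases hwne : w = u
      · subst hwne; rw [hhu]; exact U'.le_refl u'
      · obtain ⟨i, hwi, heq⟩ := hres w hwu hwne
        rw [heq]
        exact U'.le_trans _ _ _ (hA_i i w hwi) (hchild' i).1
    have hnotle : ∀ i w, U.le w (cI i) → ¬U'.le u' (hf i w) := by
      intro i w hw hle
      exact (hchild' i).2.1 (U'.le_antisymm _ _ (hchild' i).1
        (U'.le_trans _ _ _ hle (hA_i i w hw)))
    refine ⟨h, ⟨hA, ?_, ?_, ?_⟩, hhu⟩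
    · -- B
      intro w₁ w₂ h1u h2u
      by_cases h2 : w₂ = u
      · subst h2
        rw [hhu]
        exact iff_of_true h1u (hA w₁ h1u)
      by_cases h1 : w₁ = u
      · subst h1
        obtain ⟨j, hw2j, heq2⟩ := hres w₂ h2u h2
        rw [hhu, heq2]
        refine iff_of_false (fun hle => h2 (U.le_antisymm _ _ h2u hle))
          (hnotle j w₂ hw2j)
      · obtain ⟨i, hw1i, heq1⟩ := hres w₁ h1u h1
        obtain ⟨j, hw2j, heq2⟩ := hres w₂ h2u h2
        rw [heq1, heq2]
        by_cases hij : i = j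
        · subst hij
          exact hB_i i w₁ w₂ hw1i hw2j
        · refine iff_of_false
            (not_le_of_children_ne (hchild i) (hchild j) (hcIne i j hij) hw1i hw2j)
            (not_le_of_children_ne (hchild' i) (hchild' j) (hdIne i j hij)
              (hA_i i w₁ hw1i) (hA_i j w₂ hw2j))
    · -- C
      intro w₁ w₂ h1u h2u hdf
      by_cases h1 : w₁ = u
      · subst h1
        rw [hhu]
        exact U'.dfle_of_le _ _ (hA w₂ h2u)
      by_cases h2 : w₂ = u
      · exfalso
        subst h2
        exact h1 (U.dfle_antisymm _ _ hdf (U.dfle_of_le _ _ h1u))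
      · obtain ⟨i, hw1i, heq1⟩ := hres w₁ h1u h1
        obtain ⟨j, hw2j, heq2⟩ := hres w₂ h2u h2
        rw [heq1, heq2]
        by_cases hij : i = j
        · subst hij
          exact hC_i i w₁ w₂ hw1i hw2j hdf
        · have hne_c : cI i ≠ cI j := hcIne i j hij
          have hdfc : U.dfle (cI i) (cI j) := by
            rcases U.dfle_total (cI i) (cI j) with hle | hle
            · exact hle
            · exfalso
              have h21 : U.dfle w₂ w₁ :=
                dfle_across (hchild j) (hchild i) (Ne.symm hne_c) hle hw2j hw1i
              have hw12 : w₁ = w₂ := U.dfle_antisymm _ _ hdf h21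
              exact hij (huniq w₁ i j hw1i (hw12 ▸ hw2j))
          have hij_lt : i < j := by
            rcases lt_trichotomy i j with hlt | heq | hgt
            · exact hlt
            · exact absurd heq hij
            · exfalso
              exact hne_c (U.dfle_antisymm _ _ hdfc
                ((childrenList_sorted U u).rel_get_of_lt hgt))
          have hsorted : List.Pairwise U'.dfle ds :=
            List.Pairwise.sublist hsl'' (childrenList_sorted U' u')
          have hdd : U'.dfle (dI i) (dI j) :=
            hsorted.rel_get_of_lt (a := Fin.cast hlen i) (b := Fin.cast hlen j)
              (by exact hij_lt)
          exact dfle_across (hchild' i) (hchild' j) (hdIne i j hij) hdd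
            (hA_i i w₁ hw1i) (hA_i j w₂ hw2j)
    · -- D
      intro w hwu
      by_cases hwne : w = u
      · subst hwne; rw [hhu]; exact hlab
      · obtain ⟨i, hwi, heq⟩ := hres w hwu hwne
        rw [heq]
        exact hD_i i w hwi
  refine ⟨hP₀, ?_⟩
  intro hemb
  rw [encodeAt_def U m u, encodeAt_def U' m' u'] at hemb
  cases hemb with
  | inSub hsub hmem =>
    obtain ⟨c', hc'mem, heq⟩ := List.mem_map.mp hmem
    subst heq
    have hc' := mem_childrenList.mp hc'mem
    obtain ⟨h, hp⟩ := (IH (downCard U u + downCard U' c')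
      (lt_of_lt_of_le (by exact Nat.add_lt_add_left (downCard_lt_of_child hc') _) hN)
      U U' m m' u c' le_rfl).2 (by rw [encodeAt_def U m u]; exact hsub)
    obtain ⟨hpA, hpB, hpC, hpD⟩ := hp
    exact ⟨h, fun w hw => U'.le_trans _ _ _ (hpA w hw) hc'.1, hpB, hpC, hpD⟩
  | root hl hs =>
    obtain ⟨h, hp, _⟩ := hP₀ ⟨hl, hs⟩
    exact ⟨h, hp⟩

end PTGrobner

namespace PTGrobner

theorem PTHom_ext {T U : PRTree} {f g : PTHom T U} (h : f.toFun = g.toFun) : f = g := by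
  cases f; cases g; cases h; rfl

noncomputable def marking {T U : PRTree} (g : PTHom T U) : U.V → Option T.V :=
  fun u => @dite _ (∃ v, g.toFun v = u) (Classical.dec _) (fun h => some h.choose)
    (fun _ => none)

theorem marking_apply {T U : PRTree} (g : PTHom T U) (v : T.V) :
    marking g (g.toFun v) = some v := by
  rw [marking]
  have hex : ∃ v', g.toFun v' = g.toFun v := ⟨v, rfl⟩
  rw [dif_pos hex]
  exact congrArg some (g.inj hex.choose_spec)

theorem marking_eq_some {T U : PRTree} (g : PTHom T U) (u : U.V) (v : T.V)
    (h : marking g u = some v) : g.toFun v = u := by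
  rw [marking] at h
  by_cases hex : ∃ v', g.toFun v' = u
  · rw [dif_pos hex] at h
    have h2 : hex.choose = v := Option.some.inj h
    rw [← h2]
    exact hex.choose_spec
  · rw [dif_neg hex] at h; cases h

def optRel (T : PRTree) : Option T.V → Option T.V → Prop :=
  fun a b => ∀ v, a = some v → b = some v

theorem optRel_refl (T : PRTree) : ∀ l, optRel T l l := fun _ _ hv => hv

theorem optRel_trans (T : PRTree) : Transitive (optRel T) :=
  fun _ _ _ hab hbc v hv => hbc v (hab v hv)

theorem optRel_wqo (T : PRTree) :
    (Set.univ : Set (Option T.V)).PartiallyWellOrderedOn (optRel T) := by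
  rw [Set.partiallyWellOrderedOn_iff_exists_lt]
  intro f _
  haveI := T.finite
  haveI := Fintype.ofFinite T.V
  obtain ⟨i, j, hne, heq⟩ := Finite.exists_ne_map_eq_of_infinite f
  rcases hne.lt_or_gt with h | h
  · exact ⟨i, j, h, fun v hv => heq ▸ hv⟩
  · exact ⟨j, i, h, fun v hv => heq ▸ hv⟩

theorem part1 (T : PRTree) (s : ℕ → Σ U : PRTree, PTHom T U) :
    ∃ i j, i < j ∧ ∃ h : PTHom (s i).1 (s j).1, (s j).2 = h.comp (s i).2 := by
  classical
  have htree := KTree.kruskal (optRel_refl T) (optRel_trans T) (optRel_wqo T)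
  haveI : IsRefl _ (KTree.Emb (optRel T)) := ⟨KTree.Emb.refl (optRel_refl T)⟩
  haveI : IsTrans _ (KTree.Emb (optRel T)) :=
    ⟨fun a b c h₁ h₂ => KTree.Emb.trans (optRel_trans T) b c a h₁ h₂⟩
  haveI : IsPreorder _ (KTree.Emb (optRel T)) := {}
  have hlists := htree.partiallyWellOrderedOn_sublistForall₂
  obtain ⟨i, j, hij, hemb⟩ := Set.partiallyWellOrderedOn_iff_exists_lt.mp hlists
    (fun n => (childrenList (s n).1 (s n).1.root).map (encodeAt (s n).1 (marking (s n).2)))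
    (fun n t _ => Set.mem_univ t)
  have hroot_mark : ∀ n, marking (s n).2 (s n).1.root = some T.root := by
    intro n
    have := marking_apply (s n).2 T.root
    rwa [(s n).2.map_root] at this
  have hlab : optRel T (marking (s i).2 (s i).1.root) (marking (s j).2 (s j).1.root) := by
    intro v hv
    rw [hroot_mark i] at hv
    rw [hroot_mark j, ← Option.some.inj hv]
  obtain ⟨h, hp, hroot⟩ := (decode_main (optRel T)
      (downCard (s i).1 (s i).1.root + downCard (s j).1 (s j).1.root)
      (s i).1 (s j).1 (marking (s i).2) (marking (s j).2)
      (s i).1.root (s j).1.root le_rfl).1 ⟨hlab, hemb⟩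
  obtain ⟨hA, hB, hC, hD⟩ := hp
  have hloI : ∀ w : (s i).1.V, (s i).1.le w (s i).1.root := (s i).1.le_root
  refine ⟨i, j, hij, ⟨⟨h, ?_, ?_, ?_, hroot, ?_⟩, ?_⟩⟩
  · -- injective
    intro a b hab
    have h1 : (s i).1.le a b := (hB a b (hloI a) (hloI b)).mpr (hab ▸ (s j).1.le_refl _)
    have h2 : (s i).1.le b a := (hB b a (hloI b) (hloI a)).mpr (hab ▸ (s j).1.le_refl _)
    exact (s i).1.le_antisymm _ _ h1 h2
  · exact fun v w hvw => (hB v w (hloI v) (hloI w)).mp hvw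
  · exact fun v w hvw => (hB v w (hloI v) (hloI w)).mpr hvw
  · exact fun v w hvw => hC v w (hloI v) (hloI w) hvw
  · -- composition
    refine PTHom_ext (funext fun v => ?_)
    show (s j).2.toFun v = h ((s i).2.toFun v)
    have hd := hD ((s i).2.toFun v) (hloI _)
    have h1 : marking (s i).2 ((s i).2.toFun v) = some v := marking_apply _ _
    have h2 := hd v h1
    exact marking_eq_some _ _ _ h2

/-- The admissible order on each fiber: compare at the depth-first-least vertex
where the two embeddings differ. -/
def fibRel (T : PRTree) (U : PRTree) (f f' : PTHom T U) : Prop :=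
  ∃ v, f.toFun v ≠ f'.toFun v ∧ U.dfle (f.toFun v) (f'.toFun v) ∧
    ∀ w, T.dfle w v → w ≠ v → f.toFun w = f'.toFun w

theorem fibRel_irrefl (T U : PRTree) (f : PTHom T U) : ¬fibRel T U f f := by
  rintro ⟨v, hne, -, -⟩
  exact hne rfl

theorem fibRel_trans (T U : PRTree) {f g h : PTHom T U}
    (h₁ : fibRel T U f g) (h₂ : fibRel T U g h) : fibRel T U f h := by
  obtain ⟨v₁, hne₁, hdf₁, hmin₁⟩ := h₁
  obtain ⟨v₂, hne₂, hdf₂, hmin₂⟩ := h₂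
  by_cases heq : v₁ = v₂
  · subst heq
    refine ⟨v₁, ?_, U.dfle_trans _ _ _ hdf₁ hdf₂, fun w hw hwv => ?_⟩
    · intro hfh
      exact hne₁ (U.dfle_antisymm _ _ hdf₁ (hfh ▸ hdf₂))
    · rw [hmin₁ w hw hwv, hmin₂ w hw hwv]
  · rcases T.dfle_total v₁ v₂ with h12 | h21
    · -- v₁ strictly earlier
      have hgv₁ : g.toFun v₁ = h.toFun v₁ := hmin₂ v₁ h12 heq
      refine ⟨v₁, by rw [← hgv₁]; exact hne₁, by rw [← hgv₁]; exact hdf₁,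
        fun w hw hwv => ?_⟩
      have hw2 : T.dfle w v₂ := T.dfle_trans _ _ _ hw h12
      have hwv2 : w ≠ v₂ := fun hh => heq (T.dfle_antisymm _ _ h12 (hh ▸ hw))
      rw [hmin₁ w hw hwv, hmin₂ w hw2 hwv2]
    · -- v₂ strictly earlier
      have hfv₂ : f.toFun v₂ = g.toFun v₂ := hmin₁ v₂ h21 (Ne.symm heq)
      refine ⟨v₂, by rw [hfv₂]; exact hne₂, by rw [hfv₂]; exact hdf₂,
        fun w hw hwv => ?_⟩
      have hw1 : T.dfle w v₁ := T.dfle_trans _ _ _ hw h21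
      have hwv1 : w ≠ v₁ := fun hh => heq (T.dfle_antisymm v₁ v₂ (hh ▸ hw) h21)
      rw [hmin₁ w hw1 hwv1, hmin₂ w hw hwv]

theorem fibRel_trichot (T U : PRTree) (f g : PTHom T U) (hfg : f ≠ g) :
    fibRel T U f g ∨ fibRel T U g f := by
  classical
  haveI := T.finite
  letI := dfLinearOrder T
  have hne : {v | f.toFun v ≠ g.toFun v}.Nonempty := by
    by_contra hcon
    rw [Set.not_nonempty_iff_eq_empty] at hcon
    refine hfg (PTHom_ext (funext fun v => ?_))
    by_contra hv
    have hv2 : v ∈ {v | f.toFun v ≠ g.toFun v} := hv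
    rw [hcon] at hv2
    exact hv2
  obtain ⟨v, hvD, hvmin⟩ :=
    Set.exists_min_image {v | f.toFun v ≠ g.toFun v} id (Set.toFinite _) hne
  have hmin : ∀ w, T.dfle w v → w ≠ v → f.toFun w = g.toFun w := by
    intro w hw hwv
    by_contra hcon
    have h1 : T.dfle v w := hvmin w hcon
    exact hwv (T.dfle_antisymm _ _ hw h1)
  rcases U.dfle_total (f.toFun v) (g.toFun v) with h | h
  · exact Or.inl ⟨v, hvD, h, hmin⟩
  · exact Or.inr ⟨v, Ne.symm hvD, h, fun w hw hwv => (hmin w hw hwv).symm⟩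

theorem fib_finite (T U : PRTree) : Finite (PTHom T U) := by
  haveI := T.finite
  haveI := U.finite
  exact Finite.of_injective (fun f => f.toFun) (fun f g h => PTHom_ext h)

theorem sigma_lex_wf {ι : Type*} {α : ι → Type*} {r : ι → ι → Prop}
    {s : ∀ i, α i → α i → Prop} (hr : WellFounded r) (hs : ∀ i, WellFounded (s i)) :
    WellFounded (Sigma.Lex r s) := by
  have h := WellFounded.psigma_lex hr hs
  refine Subrelation.wf ?_ (InvImage.wf (fun x : Σ i, α i => (⟨x.1, x.2⟩ : Σ' i, α i)) h)
  rintro x y hxy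
  cases hxy with
  | left a b h2 => exact PSigma.Lex.left _ _ h2
  | right a b h2 => exact PSigma.Lex.right _ h2

theorem part2 (T : PRTree) :
    ∃ r : (Σ U : PRTree, PTHom T U) → (Σ U : PRTree, PTHom T U) → Prop,
      IsWellOrder (Σ U : PRTree, PTHom T U) r ∧
      ∀ (U V : PRTree) (f f' : PTHom T U) (h : PTHom U V),
        r ⟨U, f⟩ ⟨U, f'⟩ → r ⟨V, h.comp f⟩ ⟨V, h.comp f'⟩ := by
  classical
  haveI hfib : ∀ U : PRTree, IsTrans (PTHom T U) (fibRel T U) :=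
    fun U => ⟨fun _ _ _ h₁ h₂ => fibRel_trans T U h₁ h₂⟩
  haveI hfibi : ∀ U : PRTree, IsIrrefl (PTHom T U) (fibRel T U) :=
    fun U => ⟨fun f => fibRel_irrefl T U f⟩
  haveI hfibt : ∀ U : PRTree, IsTrichotomous (PTHom T U) (fibRel T U) := by
    intro U
    refine ⟨fun f g h1 h2 => ?_⟩
    by_contra hfg
    rcases fibRel_trichot T U f g hfg with h | h
    · exact h1 h
    · exact h2 h
  refine ⟨Sigma.Lex WellOrderingRel (fun U => fibRel T U), ?_, ?_⟩
  · have hwf : WellFounded (Sigma.Lex WellOrderingRel (fun U => fibRel T U)) := by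
      refine sigma_lex_wf (IsWellFounded.wf) (fun U => ?_)
      haveI := fib_finite T U
      exact Finite.wellFounded_of_trans_of_irrefl (fibRel T U)
    haveI : IsWellFounded _ (Sigma.Lex WellOrderingRel (fun U => fibRel T U)) := ⟨hwf⟩
    constructor
  · intro U V f f' h hr
    have hf : fibRel T U f f' := by
      cases hr with
      | left a b h2 => exact absurd h2 (irrefl U)
      | right a b h2 => exact h2
    obtain ⟨v, hne, hdf, hmin⟩ := hf
    refine Sigma.Lex.right _ _ ⟨v, ?_, ?_, ?_⟩
    · exact fun hh => hne (h.inj hh)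
    · exact h.map_dfle _ _ hdf
    · exact fun w hw hwv => congrArg h.toFun (hmin w hw hwv)

end PTGrobner


/-- The category `PT` of planar rooted trees is Gröbner: for every planar
rooted tree `T`, the divisibility quasi-order on the set `PT_T` of morphisms
with domain `T` is a well-quasi-order, and `PT_T` admits an admissible order. -/
theorem PT_is_Grobner (T : PRTree) :
    (∀ s : ℕ → Σ U : PRTree, PTHom T U,
        ∃ i j, i < j ∧ ∃ h : PTHom (s i).1 (s j).1, (s j).2 = h.comp (s i).2) ∧
    (∃ r : (Σ U : PRTree, PTHom T U) → (Σ U : PRTree, PTHom T U) → Prop,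
        IsWellOrder (Σ U : PRTree, PTHom T U) r ∧
        ∀ (U V : PRTree) (f f' : PTHom T U) (h : PTHom U V),
          r ⟨U, f⟩ ⟨U, f'⟩ → r ⟨V, h.comp f⟩ ⟨V, h.comp f'⟩) := by
  exact ⟨fun s => PTGrobner.part1 T s, PTGrobner.part2 T⟩
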